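/- arXiv:2203.17132 — 2 statements merged into one kernel-verified Lean document; each statement's English description precedes it below -/
import Mathlib

section
/- The pair (V, ℐ) with ℐ = {X ⊆ V : |X ∩ χ⁻¹(i)| ≤ β_i for all i, and |X| + g_X ≤ k} is a matroid, i.e., ∅ ∈ ℐ, ℐ is hereditary, and ℐ satisfies the exchange property. -/
/-!
Write `n_i(X)` for `colorCount χ X i`. Since `|X| = ∑ᵢ n_i(X)`, the quantity `|X| + g_X` equals
`∑ᵢ max(α_i, n_i(X))`, the size of `X` once every colour class is padded up to its lower bound.
It is monotone in `X`, and adding an element of colour `i` raises it by one, or not at all if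
`n_i(X) < α_i`. For the exchange property with `|A| < |B|`, take `e ∈ B \ A` of a colour `i`
with `n_i(A) < n_i(B)`, preferring one with `n_i(A) < α_i`. If there is none, every colour in which
`B` beats `A` is already padded in `A`, which forces `A` to have the smaller padded size, so there
is room for one more element.
-/

open Finset

variable {V : Type*} [DecidableEq V] [Fintype V]

/-- Number of vertices of color `i` in `X`. -/
def colorCount {c : ℕ} (χ : V → Fin c) (X : Finset V) (i : Fin c) : ℕ :=
  (X.filter (fun v => χ v = i)).card

/-- The family ℐ of independent sets: color upper bounds hold and there is
still room to satisfy all lower bounds within `k` elements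
(`α i - colorCount χ X i` is truncated subtraction, i.e. `max 0 (α i - |X ∩ χ⁻¹ i|)`). -/
def FairIndep {c : ℕ} (χ : V → Fin c) (α β : Fin c → ℕ) (k : ℕ) (X : Finset V) : Prop :=
  (∀ i, colorCount χ X i ≤ β i) ∧
    X.card + ∑ i, (α i - colorCount χ X i) ≤ k

section ColorCount

variable {W : Type*} {c : ℕ} (χ : W → Fin c)

theorem sum_colorCount (X : Finset W) : ∑ i, colorCount χ X i = X.card :=
  (card_eq_sum_card_fiberwise fun v _ => mem_univ (χ v)).symm

theorem colorCount_mono {X Y : Finset W} (h : X ⊆ Y) (i : Fin c) :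
    colorCount χ X i ≤ colorCount χ Y i :=
  card_le_card (filter_subset_filter _ h)

theorem colorCount_insert [DecidableEq W] {X : Finset W} {e : W} (he : e ∉ X) (i : Fin c) :
    colorCount χ (insert e X) i = colorCount χ X i + if χ e = i then 1 else 0 := by
  unfold colorCount
  split_ifs with h
  · rw [filter_insert, if_pos h, card_insert_of_notMem fun hm => he (mem_filter.mp hm).1]
  · rw [filter_insert, if_neg h, add_zero]

theorem exists_mem_sdiff_of_colorCount_lt [DecidableEq W] {A B : Finset W} {i : Fin c}
    (h : colorCount χ A i < colorCount χ B i) : ∃ e ∈ B \ A, χ e = i := by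
  obtain ⟨e, heB, heA⟩ := not_subset.mp fun hsub => (card_le_card hsub).not_gt h
  obtain ⟨heB, hei⟩ := mem_filter.mp heB
  exact ⟨e, mem_sdiff.mpr ⟨heB, fun heA' => heA (mem_filter.mpr ⟨heA', hei⟩)⟩, hei⟩

end ColorCount

theorem sum_max_lt_sum_max {ι : Type*} (s : Finset ι) {a m n : ι → ℕ}
    (hlt : ∑ i ∈ s, m i < ∑ i ∈ s, n i) (ha : ∀ i ∈ s, m i < n i → a i ≤ m i) :
    ∑ i ∈ s, max (a i) (m i) < ∑ i ∈ s, max (a i) (n i) := by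
  have key : ∑ i ∈ s, (max (a i) (m i) + n i) ≤ ∑ i ∈ s, (max (a i) (n i) + m i) :=
    sum_le_sum fun i hi => by
      have := ha i hi
      omega
  rw [sum_add_distrib, sum_add_distrib] at key
  omega

section PaddedCard

variable {W : Type*} {c : ℕ} (χ : W → Fin c) (α : Fin c → ℕ)

def paddedCard (X : Finset W) : ℕ :=
  ∑ i, max (α i) (colorCount χ X i)

theorem card_add_sum_tsub_colorCount (X : Finset W) :
    X.card + ∑ i, (α i - colorCount χ X i) = paddedCard χ α X := by
  rw [← sum_colorCount χ X, ← sum_add_distrib, paddedCard]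
  exact sum_congr rfl fun i _ => by omega

theorem paddedCard_empty : paddedCard χ α (∅ : Finset W) = ∑ i, α i := by
  simp [paddedCard, colorCount]

theorem paddedCard_mono {X Y : Finset W} (h : X ⊆ Y) : paddedCard χ α X ≤ paddedCard χ α Y :=
  sum_le_sum fun i _ => max_le_max le_rfl (colorCount_mono χ h i)

theorem paddedCard_insert_le [DecidableEq W] {X : Finset W} {e : W} (he : e ∉ X) :
    paddedCard χ α (insert e X) ≤
      paddedCard χ α X + if α (χ e) ≤ colorCount χ X (χ e) then 1 else 0 := by
  calc paddedCard χ α (insert e X)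
      ≤ ∑ i, (max (α i) (colorCount χ X i) +
          if χ e = i then (if α (χ e) ≤ colorCount χ X (χ e) then 1 else 0) else 0) :=
        sum_le_sum fun i _ => by
          rw [colorCount_insert χ he]
          split_ifs with h <;> subst_vars <;> omega
    _ = _ := by rw [sum_add_distrib, sum_ite_eq, if_pos (mem_univ _), paddedCard]

end PaddedCard

section FairIndep

variable {W : Type*} {c : ℕ} {χ : W → Fin c} {α β : Fin c → ℕ} {k : ℕ}

theorem fairIndep_iff {X : Finset W} :
    FairIndep χ α β k X ↔ (∀ i, colorCount χ X i ≤ β i) ∧ paddedCard χ α X ≤ k := by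
  rw [FairIndep, card_add_sum_tsub_colorCount]

theorem fairIndep_empty (hk : ∑ i, α i ≤ k) : FairIndep χ α β k (∅ : Finset W) :=
  fairIndep_iff.mpr ⟨fun i => by simp [colorCount], (paddedCard_empty χ α).trans_le hk⟩

theorem FairIndep.subset {X Y : Finset W} (hY : FairIndep χ α β k Y) (h : X ⊆ Y) :
    FairIndep χ α β k X := by
  rw [fairIndep_iff] at hY ⊢
  exact ⟨fun i => (colorCount_mono χ h i).trans (hY.1 i), (paddedCard_mono χ α h).trans hY.2⟩

theorem FairIndep.exists_insert [DecidableEq W] {A B : Finset W} (hA : FairIndep χ α β k A)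
    (hB : FairIndep χ α β k B) (hcard : A.card < B.card) :
    ∃ e ∈ B \ A, FairIndep χ α β k (insert e A) := by
  rw [fairIndep_iff] at hA hB
  obtain ⟨i, hiB, hroom⟩ : ∃ i, colorCount χ A i < colorCount χ B i ∧
      (colorCount χ A i < α i ∨ paddedCard χ α A < paddedCard χ α B) := by
    by_cases hpad : ∃ i, colorCount χ A i < colorCount χ B i ∧ colorCount χ A i < α i
    · obtain ⟨i, hiB, hiα⟩ := hpad
      exact ⟨i, hiB, Or.inl hiα⟩
    · push Not at hpad
      rw [← sum_colorCount χ A, ← sum_colorCount χ B] at hcard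
      obtain ⟨i, -, hiB⟩ := exists_lt_of_sum_lt hcard
      exact ⟨i, hiB, Or.inr (sum_max_lt_sum_max _ hcard fun j _ => hpad j)⟩
  obtain ⟨e, he, rfl⟩ := exists_mem_sdiff_of_colorCount_lt χ hiB
  have heA : e ∉ A := (mem_sdiff.mp he).2
  refine ⟨e, he, fairIndep_iff.mpr ⟨fun j => ?_, ?_⟩⟩
  · have := hA.1 j
    have := hB.1 j
    rw [colorCount_insert χ heA]
    split_ifs with h <;> subst_vars <;> omega
  · have := paddedCard_insert_le χ α heA
    split_ifs at this <;> omega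

end FairIndep

theorem fairIndep_matroid_general {c : ℕ} (χ : V → Fin c) (α β : Fin c → ℕ) (k : ℕ)
    (hk : ∑ i, α i ≤ k) :
    FairIndep χ α β k (∅ : Finset V) ∧
    (∀ X X' : Finset V, X' ⊆ X → FairIndep χ α β k X → FairIndep χ α β k X') ∧
    (∀ A B : Finset V, FairIndep χ α β k A → FairIndep χ α β k B →
      A.card < B.card → ∃ e ∈ B \ A, FairIndep χ α β k (insert e A)) :=
  ⟨fairIndep_empty hk, fun _ _ h hX => hX.subset h, fun _ _ hA hB => hA.exists_insert hB⟩

theorem fairIndep_matroid {c : ℕ} (χ : V → Fin c) (α β : Fin c → ℕ) (k : ℕ)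
    (hαβ : ∀ i, α i ≤ β i) (hk : ∑ i, α i ≤ k) :
    FairIndep χ α β k (∅ : Finset V) ∧
    (∀ X X' : Finset V, X' ⊆ X → FairIndep χ α β k X → FairIndep χ α β k X') ∧
    (∀ A B : Finset V, FairIndep χ α β k A → FairIndep χ α β k B →
      A.card < B.card → ∃ e ∈ B \ A, FairIndep χ α β k (insert e A)) :=
  fairIndep_matroid_general χ α β k hk
end

section
/- All bases of the matroid M = (V, ℐ) with ℐ = {X ⊆ V : |X ∩ χ⁻¹(i)| ≤ β_i for all i, |X| + g_X ≤ k} are balance-fair in the following sense: if α_i = β_i = r for all i and k = c·r, then every basis B satisfies |B ∩ χ⁻¹(i)| = r for every color i. -/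
open Finset

variable {V : Type*} [DecidableEq V] [Fintype V]

/-! Adding to an independent set a vertex whose color is below both of its bounds raises the
cardinality by one and lowers the total deficiency `g_X` by one, so the set stays independent.
Hence a basis contains every vertex of each color that is below both bounds; with
`α = β = r` and at least `r` vertices of each color, no color can be below `r`. -/

section

variable {c : ℕ} (χ : V → Fin c)

section

omit [Fintype V]

lemma colorCount_insert_self {X : Finset V} {v : V} (hv : v ∉ X) :
    colorCount χ (insert v X) (χ v) = colorCount χ X (χ v) + 1 := by
  unfold colorCount
  rw [filter_insert, if_pos rfl, card_insert_of_notMem (fun h => hv (mem_filter.mp h).1)]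

lemma colorCount_insert_of_ne (X : Finset V) {v : V} {i : Fin c} (hi : χ v ≠ i) :
    colorCount χ (insert v X) i = colorCount χ X i := by
  unfold colorCount
  rw [filter_insert, if_neg hi]

lemma sum_tsub_colorCount_insert (α : Fin c → ℕ) {X : Finset V} {v : V} (hv : v ∉ X)
    (hlt : colorCount χ X (χ v) < α (χ v)) :
    ∑ i, (α i - colorCount χ (insert v X) i) + 1 = ∑ i, (α i - colorCount χ X i) := by
  rw [← add_sum_erase _ _ (mem_univ (χ v)), ← add_sum_erase _ _ (mem_univ (χ v)),
    colorCount_insert_self χ hv,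
    sum_congr rfl fun i hi => by rw [colorCount_insert_of_ne χ X (ne_of_mem_erase hi).symm]]
  omega

lemma FairIndep.insert {α β : Fin c → ℕ} {k : ℕ} {X : Finset V} (hX : FairIndep χ α β k X)
    {v : V} (hv : v ∉ X) (hα : colorCount χ X (χ v) < α (χ v))
    (hβ : colorCount χ X (χ v) < β (χ v)) : FairIndep χ α β k (insert v X) := by
  refine ⟨fun i => ?_, ?_⟩
  · by_cases hi : χ v = i
    · subst hi
      rw [colorCount_insert_self χ hv]
      exact hβ
    · rw [colorCount_insert_of_ne χ X hi]
      exact hX.1 i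
  · have hsum := sum_tsub_colorCount_insert χ α hv hα
    rw [card_insert_of_notMem hv]
    linarith [hX.2]

end

lemma exists_notMem_of_colorCount_lt {X : Finset V} {i : Fin c}
    (h : colorCount χ X i < colorCount χ univ i) : ∃ v ∉ X, χ v = i := by
  by_contra! hall
  refine h.not_ge (card_le_card fun v hv => ?_)
  obtain ⟨-, hvi⟩ := mem_filter.mp hv
  exact mem_filter.mpr ⟨not_not.mp fun hvX => hall v hvX hvi, hvi⟩

lemma colorCount_eq_univ_of_maximal {α β : Fin c → ℕ} {k : ℕ} {B : Finset V}
    (hB : FairIndep χ α β k B)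
    (hmax : ∀ B' : Finset V, FairIndep χ α β k B' → B ⊆ B' → B' = B) {i : Fin c}
    (hα : colorCount χ B i < α i) (hβ : colorCount χ B i < β i) :
    colorCount χ B i = colorCount χ univ i := by
  refine le_antisymm (card_le_card (filter_subset_filter _ (subset_univ B))) ?_
  by_contra! hlt
  obtain ⟨v, hvB, rfl⟩ := exists_notMem_of_colorCount_lt χ hlt
  exact hvB (hmax _ (hB.insert χ hvB hα hβ) (subset_insert v B) ▸ mem_insert_self v B)

end

theorem fairIndep_basis_balanced {c : ℕ} (χ : V → Fin c) (r : ℕ)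
    (hfull : ∀ i, r ≤ colorCount χ (Finset.univ : Finset V) i)
    (B : Finset V)
    (hB : FairIndep χ (fun _ => r) (fun _ => r) (c * r) B)
    (hmax : ∀ B' : Finset V, FairIndep χ (fun _ => r) (fun _ => r) (c * r) B' →
      B ⊆ B' → B' = B) :
    ∀ i, colorCount χ B i = r := by
  intro i
  refine (hB.1 i).antisymm (not_lt.mp fun hlt => ?_)
  have hall := colorCount_eq_univ_of_maximal χ hB hmax hlt hlt
  exact hlt.not_ge (hall ▸ hfull i)
end
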